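/- Let N ≥ 1. The average Shannon entropy of a probability vector drawn from the uniform probability measure on the probability simplex Δ_{N−1} equals H_N − 1, i.e., ∫ H(λ) dμ_N(λ) = H_N − 1, where H_N = Σ_{j=1}^N 1/j. -/

import Mathlib

open MeasureTheory Real

/-- Shannon entropy of a vector, with the convention `0 * log 0 = 0`. -/
noncomputable def shannonEntropy {N : ℕ} (p : Fin N → ℝ) : ℝ :=
  ∑ i, Real.negMulLog (p i)

/-- Subentropy of a vector (well defined when the entries are pairwise distinct). -/
noncomputable def subentropy {N : ℕ} (p : Fin N → ℝ) : ℝ :=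
  -∑ i, p i ^ N * Real.log (p i) / ∏ j ∈ Finset.univ.erase i, (p i - p j)

/-- A matrix is bi-stochastic if it has nonnegative entries and all row and column sums are 1. -/
def IsBistochastic {N : ℕ} (B : Matrix (Fin N) (Fin N) ℝ) : Prop :=
  (∀ i j, 0 ≤ B i j) ∧ (∀ i, ∑ j, B i j = 1) ∧ (∀ j, ∑ i, B i j = 1)

/-- Parametrization of the probability simplex `Δ_{N-1}` by the solid simplex in `ℝ^{N-1}`:
`x ↦ (x_1, …, x_{N-1}, 1 - ∑_{j<N} x_j)`. -/
noncomputable def simplexMap (N : ℕ) (x : Fin (N - 1) → ℝ) : Fin N → ℝ :=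
  fun i => if h : (i : ℕ) < N - 1 then x ⟨i, h⟩ else 1 - ∑ j, x j

/-- The solid simplex `T = {x ∈ ℝ^{N-1} : x_j ≥ 0, ∑_j x_j ≤ 1}`. -/
def solidSimplex (N : ℕ) : Set (Fin (N - 1) → ℝ) :=
  {x | (∀ j, 0 ≤ x j) ∧ ∑ j, x j ≤ 1}

/-- Integral of a function on the probability simplex with respect to the uniform
probability measure `μ_N`, realized as `(N-1)!` times the Lebesgue integral over the
solid simplex of the parametrized integrand. -/
noncomputable def simplexIntegral (N : ℕ) (f : (Fin N → ℝ) → ℝ) : ℝ :=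
  ((N - 1).factorial : ℝ) * ∫ x in solidSimplex N, f (simplexMap N x)

/-- The `N`-th harmonic number `H_N = ∑_{j=1}^N 1/j`. -/
noncomputable def harmonicNum (N : ℕ) : ℝ := ∑ j ∈ Finset.range N, (1 : ℝ) / (j + 1)

/-!
For `x` in `S = {x ∈ ℝⁿ : x ≥ 0, ∑ x ≤ r}` put `λ = (x, r - ∑ x)`. Integrating out by Fubini a
coordinate of `x` other than the one `φ` is applied to shows that `∫_S φ(λ_i)` is, for each of the
`n + 1` coordinates of `λ` (the slack `r - ∑ x` included), the `n`-fold iterated integral of `φ`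
from `0` to `r`. For `φ = negMulLog` that iterated integral is
`((H_{n+1} - 1) r^{n+1} + r^n negMulLog r) / (n + 1)!`, so the average entropy over `Δ_n` is
`n! (n + 1) (H_{n+1} - 1) / (n + 1)! = H_{n+1} - 1`.
-/

open Finset

theorem integral_insertNth {n : ℕ} (p : Fin (n + 1)) {F : (Fin (n + 1) → ℝ) → ℝ}
    (hF : Integrable F) : ∫ x, F x = ∫ t, ∫ y, F (p.insertNth t y) := by
  have hmp :=
    (measurePreserving_piFinSuccAbove (fun _ : Fin (n + 1) => (volume : Measure ℝ)) p).symm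
  rw [volume_pi, ← hmp.integral_comp', integral_prod]
  · rfl
  · exact (hmp.integrable_comp_emb (MeasurableEquiv.measurableEmbedding _)).mpr hF

theorem intervalIntegral_comp_sub_left_zero (f : ℝ → ℝ) (r : ℝ) :
    ∫ t in (0 : ℝ)..r, f (r - t) = ∫ s in (0 : ℝ)..r, f s := by
  simp [intervalIntegral.integral_comp_sub_left f r]

def scaledSolidSimplex (n : ℕ) (r : ℝ) : Set (Fin n → ℝ) :=
  {x | (∀ j, 0 ≤ x j) ∧ ∑ j, x j ≤ r}

section ScaledSolidSimplex

variable {n : ℕ} {r : ℝ}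

theorem scaledSolidSimplex_zero (hr : 0 ≤ r) : scaledSolidSimplex 0 r = Set.univ :=
  Set.eq_univ_of_forall fun _ => ⟨fun j => j.elim0, by simpa using hr⟩

theorem isClosed_scaledSolidSimplex : IsClosed (scaledSolidSimplex n r) := by
  simp only [scaledSolidSimplex, Set.ofPred_and, Set.ofPred_forall]
  exact (isClosed_iInter fun j => isClosed_le continuous_const (continuous_apply j)).inter
    (isClosed_le (by fun_prop) continuous_const)

theorem isCompact_scaledSolidSimplex : IsCompact (scaledSolidSimplex n r) :=
  (isCompact_Icc (a := 0) (b := fun _ => r)).of_isClosed_subset isClosed_scaledSolidSimplex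
    fun _ ⟨h0, hsum⟩ => ⟨h0, fun j => (single_le_sum (fun i _ => h0 i) (mem_univ j)).trans hsum⟩

theorem insertNth_mem_scaledSolidSimplex_iff (p : Fin (n + 1)) {t : ℝ} {y : Fin n → ℝ} :
    p.insertNth t y ∈ scaledSolidSimplex (n + 1) r ↔
      0 ≤ t ∧ y ∈ scaledSolidSimplex n (r - t) := by
  simp only [scaledSolidSimplex, Set.mem_ofPred_eq, p.forall_iff_succAbove,
    Fin.insertNth_apply_same, Fin.insertNth_apply_succAbove, Fin.sum_insertNth,
    le_sub_iff_add_le', and_assoc]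

theorem setIntegral_scaledSolidSimplex_succ (p : Fin (n + 1)) {g : (Fin (n + 1) → ℝ) → ℝ}
    (hg : Continuous g) (hr : 0 ≤ r) :
    ∫ x in scaledSolidSimplex (n + 1) r, g x =
      ∫ t in (0 : ℝ)..r, ∫ y in scaledSolidSimplex n (r - t), g (p.insertNth t y) := by
  have hg_int : Integrable ((scaledSolidSimplex (n + 1) r).indicator g) :=
    (hg.continuousOn.integrableOn_compact isCompact_scaledSolidSimplex).integrable_indicator
      isClosed_scaledSolidSimplex.measurableSet
  rw [← integral_indicator isClosed_scaledSolidSimplex.measurableSet, integral_insertNth p hg_int,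
    intervalIntegral.integral_of_le hr, ← integral_Icc_eq_integral_Ioc,
    ← integral_indicator measurableSet_Icc]
  congr 1 with t
  by_cases ht : t ∈ Set.Icc 0 r
  · rw [Set.indicator_of_mem ht, ← integral_indicator isClosed_scaledSolidSimplex.measurableSet]
    congr 1 with y
    have hmem :=
      (insertNth_mem_scaledSolidSimplex_iff p (r := r) (y := y)).trans (and_iff_right ht.1)
    by_cases hy : y ∈ scaledSolidSimplex n (r - t)
    · rw [Set.indicator_of_mem hy, Set.indicator_of_mem (hmem.2 hy)]
    · rw [Set.indicator_of_notMem hy, Set.indicator_of_notMem (hmem.not.2 hy)]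
  · rw [Set.indicator_of_notMem ht]
    refine integral_eq_zero_of_ae (Filter.Eventually.of_forall fun y => ?_)
    refine Set.indicator_of_notMem (fun hmem => ht ?_) _
    obtain ⟨ht0, hy, hsum⟩ := (insertNth_mem_scaledSolidSimplex_iff p).1 hmem
    exact ⟨ht0, by linarith [sum_nonneg fun j (_ : j ∈ univ) => hy j]⟩

end ScaledSolidSimplex

noncomputable def iteratedIntegral (φ : ℝ → ℝ) : ℕ → ℝ → ℝ
  | 0 => φ
  | n + 1 => fun r => ∫ s in (0 : ℝ)..r, iteratedIntegral φ n s

section IteratedIntegral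

variable {φ : ℝ → ℝ} {r : ℝ}

theorem iteratedIntegral_succ (n : ℕ) :
    iteratedIntegral φ (n + 1) r = ∫ s in (0 : ℝ)..r, iteratedIntegral φ n s :=
  rfl

theorem setIntegral_scaledSolidSimplex_comp_slack (hφ : Continuous φ) (n : ℕ) (hr : 0 ≤ r) :
    ∫ x in scaledSolidSimplex n r, φ (r - ∑ j, x j) = iteratedIntegral φ n r := by
  induction n generalizing r with
  | zero => simp [scaledSolidSimplex_zero hr, iteratedIntegral, measureReal_def, volume_pi]
  | succ n ih =>
    rw [setIntegral_scaledSolidSimplex_succ 0 (by fun_prop) hr, iteratedIntegral_succ,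
      ← intervalIntegral_comp_sub_left_zero (iteratedIntegral φ n)]
    refine intervalIntegral.integral_congr fun t ht => ?_
    rw [Set.uIcc_of_le hr] at ht
    simp only [Fin.sum_insertNth, ← sub_sub]
    exact ih (sub_nonneg.2 ht.2)

theorem setIntegral_scaledSolidSimplex_comp_apply (hφ : Continuous φ) {n : ℕ} (i : Fin n)
    (hr : 0 ≤ r) : ∫ x in scaledSolidSimplex n r, φ (x i) = iteratedIntegral φ n r := by
  induction n generalizing r with
  | zero => exact i.elim0
  | succ n ih =>
    rw [iteratedIntegral_succ]
    rcases n with _ | n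
    · rw [Fin.fin_one_eq_zero i, setIntegral_scaledSolidSimplex_succ 0 (by fun_prop) hr]
      refine intervalIntegral.integral_congr fun t ht => ?_
      rw [Set.uIcc_of_le hr] at ht
      simp [scaledSolidSimplex_zero (sub_nonneg.2 ht.2), iteratedIntegral, measureReal_def,
        volume_pi]
    · obtain ⟨p, hp⟩ := exists_ne i
      obtain ⟨j, rfl⟩ := Fin.exists_succAbove_eq hp.symm
      rw [setIntegral_scaledSolidSimplex_succ p (by fun_prop) hr,
        ← intervalIntegral_comp_sub_left_zero (iteratedIntegral φ (n + 1))]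
      refine intervalIntegral.integral_congr fun t ht => ?_
      rw [Set.uIcc_of_le hr] at ht
      simp only [Fin.insertNth_apply_succAbove]
      exact ih j (sub_nonneg.2 ht.2)

theorem setIntegral_scaledSolidSimplex_sum_add_slack (hφ : Continuous φ) (n : ℕ) (hr : 0 ≤ r) :
    ∫ x in scaledSolidSimplex n r, (∑ i, φ (x i) + φ (r - ∑ j, x j)) =
      (n + 1) * iteratedIntegral φ n r := by
  have hintegrable {g : (Fin n → ℝ) → ℝ} (hg : Continuous g) :
      IntegrableOn g (scaledSolidSimplex n r) :=
    hg.continuousOn.integrableOn_compact isCompact_scaledSolidSimplex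
  rw [integral_add (integrable_finsetSum _ fun i _ => hintegrable (by fun_prop))
      (hintegrable (by fun_prop)),
    integral_finsetSum _ fun i _ => hintegrable (by fun_prop)]
  simp only [setIntegral_scaledSolidSimplex_comp_apply hφ _ hr,
    setIntegral_scaledSolidSimplex_comp_slack hφ n hr, sum_const, card_univ, Fintype.card_fin,
    nsmul_eq_mul]
  ring

end IteratedIntegral

theorem harmonicNum_succ (n : ℕ) : harmonicNum (n + 1) = harmonicNum n + 1 / (n + 1) := by
  simp [harmonicNum, sum_range_succ]

theorem hasDerivAt_pow_succ_mul_negMulLog (k : ℕ) {s : ℝ} (hs : s ≠ 0) :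
    HasDerivAt (fun u => u ^ (k + 1) * negMulLog u)
      ((k + 2) * s ^ k * negMulLog s - s ^ (k + 1)) s := by
  refine ((hasDerivAt_pow (k + 1) s).mul (hasDerivAt_negMulLog hs)).congr_deriv ?_
  simp only [negMulLog, Nat.add_sub_cancel, pow_succ]
  push_cast
  field_simp
  ring

theorem iteratedIntegral_negMulLog (n : ℕ) {r : ℝ} (hr : 0 ≤ r) :
    iteratedIntegral negMulLog n r =
      ((harmonicNum (n + 1) - 1) * r ^ (n + 1) + r ^ n * negMulLog r) / (n + 1).factorial := by
  induction n generalizing r with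
  | zero => simp [iteratedIntegral, harmonicNum]
  | succ n ih =>
    rw [iteratedIntegral_succ, intervalIntegral.integral_congr fun s hs =>
      ih (by rw [Set.uIcc_of_le hr] at hs; exact hs.1)]
    have hderiv {s : ℝ} (hs : s ≠ 0) : HasDerivAt
        (fun u =>
          ((harmonicNum (n + 2) - 1) * u ^ (n + 2) + u ^ (n + 1) * negMulLog u) / (n + 2).factorial)
        (((harmonicNum (n + 1) - 1) * s ^ (n + 1) + s ^ n * negMulLog s) / (n + 1).factorial)
        s := by
      refine ((((hasDerivAt_pow (n + 2) s).const_mul _).add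
        (hasDerivAt_pow_succ_mul_negMulLog n hs)).div_const _).congr_deriv ?_
      rw [harmonicNum_succ (n + 1), Nat.factorial_succ (n + 1)]
      push_cast
      field_simp
      ring
    rw [intervalIntegral.integral_eq_sub_of_hasDeriv_right_of_le hr (by fun_prop)
      (fun s hs => (hderiv hs.1.ne').hasDerivWithinAt)
      (Continuous.intervalIntegrable (by fun_prop) _ _)]
    simp

theorem shannonEntropy_simplexMap (n : ℕ) (x : Fin n → ℝ) :
    shannonEntropy (simplexMap (n + 1) x) = ∑ i, negMulLog (x i) + negMulLog (1 - ∑ j, x j) := by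
  simp [shannonEntropy, simplexMap, Fin.sum_univ_castSucc]

/-- The average Shannon entropy over the uniform measure on the probability
simplex equals `H_N - 1`. -/
theorem avg_entropy_simplex (N : ℕ) (hN : 1 ≤ N) :
    simplexIntegral N (fun lam => shannonEntropy lam) = harmonicNum N - 1 := by
  obtain ⟨n, rfl⟩ := Nat.exists_eq_add_of_le' hN
  change (n.factorial : ℝ) *
    ∫ x in scaledSolidSimplex n 1, shannonEntropy (simplexMap (n + 1) x) = _
  simp only [shannonEntropy_simplexMap]
  rw [setIntegral_scaledSolidSimplex_sum_add_slack continuous_negMulLog n zero_le_one,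
    iteratedIntegral_negMulLog n zero_le_one, Nat.factorial_succ]
  push_cast
  field_simp
  simp
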